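/- Let Φ = (Φ₁, Φ₂) : I × Λ → Ω ⊆ ℍ be a C² diffeomorphism with each Φ(·,p) legendrian, and define A = ∂_{p₁}Φ₂ ∂_{p₂}Φ₁ − ∂_{p₂}Φ₂ ∂_{p₁}Φ₁ + 2 Φ₁ Im(∂_{p₁}Φ₁ conj(∂_{p₂}Φ₁)). Then ∂_s A = −∂_{s,p₁}Φ₁ ( ∂_{p₂}Φ₂ + 2 Im(conj(Φ₁) ∂_{p₂}Φ₁) ) + ∂_{s,p₂}Φ₁ ( ∂_{p₁}Φ₂ + 2 Im(conj(Φ₁) ∂_{p₁}Φ₁) ) + 4 ∂_s Φ₁ Im( ∂_{p₁}Φ₁ conj(∂_{p₂}Φ₁) ). Consequently Im( conj(∂_s Φ₁) ∂_s A ) = −(∂_{p₂}Φ₂ + 2 Im(conj(Φ₁)∂_{p₂}Φ₁)) Im(conj(∂_s Φ₁) ∂_{s,p₁}Φ₁) + (∂_{p₁}Φ₂ + 2 Im(conj(Φ₁)∂_{p₁}Φ₁)) Im(conj(∂_s Φ₁) ∂_{s,p₂}Φ₁). -/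

import Mathlib

open Set Complex

/-- `∂_s` of a function on `I × Λ ⊆ ℝ × ℝ²` with values in `ℂ`. -/
noncomputable def pdS (f : ℝ × (ℝ × ℝ) → ℂ) (x : ℝ × (ℝ × ℝ)) : ℂ :=
  deriv (fun s => f (s, x.2)) x.1

/-- `∂_{p₁}`. -/
noncomputable def pd1 (f : ℝ × (ℝ × ℝ) → ℂ) (x : ℝ × (ℝ × ℝ)) : ℂ :=
  deriv (fun t => f (x.1, (t, x.2.2))) x.2.1

/-- `∂_{p₂}`. -/
noncomputable def pd2 (f : ℝ × (ℝ × ℝ) → ℂ) (x : ℝ × (ℝ × ℝ)) : ℂ :=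
  deriv (fun t => f (x.1, (x.2.1, t))) x.2.2

/-- The function `A = ∂_{p₁}Φ₂ ∂_{p₂}Φ₁ − ∂_{p₂}Φ₂ ∂_{p₁}Φ₁ + 2Φ₁ Im(∂_{p₁}Φ₁ conj(∂_{p₂}Φ₁))`. -/
noncomputable def funA (Φ₁ : ℝ × (ℝ × ℝ) → ℂ) (Φ₂ : ℝ × (ℝ × ℝ) → ℝ)
    (x : ℝ × (ℝ × ℝ)) : ℂ :=
  pd1 (fun y => (Φ₂ y : ℂ)) x * pd2 Φ₁ x - pd2 (fun y => (Φ₂ y : ℂ)) x * pd1 Φ₁ x +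
    2 * Φ₁ x * (((pd1 Φ₁ x * (starRingEnd ℂ) (pd2 Φ₁ x)).im : ℝ) : ℂ)

section Helpers

local notation "EE" => ℝ × (ℝ × ℝ)

/-- direction `∂_s`. -/
def eS : ℝ × (ℝ × ℝ) := (1, (0, 0))
/-- direction `∂_{p₁}`. -/
def eP1 : ℝ × (ℝ × ℝ) := (0, (1, 0))
/-- direction `∂_{p₂}`. -/
def eP2 : ℝ × (ℝ × ℝ) := (0, (0, 1))

lemma hasDerivAt_lineS (x : EE) : HasDerivAt (fun s : ℝ => ((s, x.2) : EE)) eS x.1 :=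
  (hasDerivAt_id _).prodMk (hasDerivAt_const _ _)

lemma hasDerivAt_lineP1 (x : EE) :
    HasDerivAt (fun t : ℝ => ((x.1, (t, x.2.2)) : EE)) eP1 x.2.1 :=
  (hasDerivAt_const _ _).prodMk ((hasDerivAt_id _).prodMk (hasDerivAt_const _ _))

lemma hasDerivAt_lineP2 (x : EE) :
    HasDerivAt (fun t : ℝ => ((x.1, (x.2.1, t)) : EE)) eP2 x.2.2 :=
  (hasDerivAt_const _ _).prodMk ((hasDerivAt_const _ _).prodMk (hasDerivAt_id _))

variable {F' : Type*} [NormedAddCommGroup F'] [NormedSpace ℝ F']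

lemma hasDerivAt_S {f : EE → F'} {x : EE} (hf : DifferentiableAt ℝ f x) :
    HasDerivAt (fun s => f (s, x.2)) (fderiv ℝ f x eS) x.1 :=
  hf.hasFDerivAt.comp_hasDerivAt _ (hasDerivAt_lineS x)

lemma hasDerivAt_P1 {f : EE → F'} {x : EE} (hf : DifferentiableAt ℝ f x) :
    HasDerivAt (fun t => f (x.1, (t, x.2.2))) (fderiv ℝ f x eP1) x.2.1 :=
  hf.hasFDerivAt.comp_hasDerivAt _ (hasDerivAt_lineP1 x)

lemma hasDerivAt_P2 {f : EE → F'} {x : EE} (hf : DifferentiableAt ℝ f x) :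
    HasDerivAt (fun t => f (x.1, (x.2.1, t))) (fderiv ℝ f x eP2) x.2.2 :=
  hf.hasFDerivAt.comp_hasDerivAt _ (hasDerivAt_lineP2 x)

lemma pdS_eq {f : EE → ℂ} {x : EE} (hf : DifferentiableAt ℝ f x) :
    pdS f x = fderiv ℝ f x eS := (hasDerivAt_S hf).deriv

lemma pd1_eq {f : EE → ℂ} {x : EE} (hf : DifferentiableAt ℝ f x) :
    pd1 f x = fderiv ℝ f x eP1 := (hasDerivAt_P1 hf).deriv

lemma pd2_eq {f : EE → ℂ} {x : EE} (hf : DifferentiableAt ℝ f x) :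
    pd2 f x = fderiv ℝ f x eP2 := (hasDerivAt_P2 hf).deriv

lemma hasDerivAt_apply_const {u : ℝ → EE →L[ℝ] ℂ} {u' : EE →L[ℝ] ℂ} {t : ℝ} (v : EE)
    (hu : HasDerivAt u u' t) : HasDerivAt (fun s => u s v) (u' v) t :=
  (ContinuousLinearMap.apply ℝ ℂ v).hasFDerivAt.comp_hasDerivAt t hu

lemma fderiv_apply_const {g : EE → EE →L[ℝ] ℂ} {x : EE} (hg : DifferentiableAt ℝ g x)
    (v w : EE) : fderiv ℝ (fun y => g y v) x w = fderiv ℝ g x w v := by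
  have h := ((ContinuousLinearMap.apply ℝ ℂ v).hasFDerivAt.comp x hg.hasFDerivAt).fderiv
  rw [show (fun y => g y v) = (ContinuousLinearMap.apply ℝ ℂ v) ∘ g from rfl, h]
  rfl

lemma clairaut {f : EE → ℂ} {x : EE} {s : Set EE} (hs : IsOpen s) (hx : x ∈ s)
    (hf : ContDiffOn ℝ 2 f s) (v w : EE) :
    fderiv ℝ (fderiv ℝ f) x v w = fderiv ℝ (fderiv ℝ f) x w v := by
  have h1 : ∀ᶠ y in nhds x, HasFDerivAt f (fderiv ℝ f y) y := by
    filter_upwards [hs.mem_nhds hx] with y hy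
    exact ((hf.contDiffAt (hs.mem_nhds hy)).differentiableAt two_ne_zero).hasFDerivAt
  have h2 : HasFDerivAt (fderiv ℝ f) (fderiv ℝ (fderiv ℝ f) x) x := by
    have h3 := (hf.contDiffAt (hs.mem_nhds hx)).fderiv_right (m := 1) (by norm_num)
    exact (h3.differentiableAt one_ne_zero).hasFDerivAt
  exact second_derivative_symmetric_of_eventually h1 h2 v w

/-- `z ↦ ((z.im : ℝ) : ℂ)` as a continuous `ℝ`-linear map. -/
noncomputable def imC : ℂ →L[ℝ] ℂ := Complex.ofRealCLM.comp Complex.imCLM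

lemma line_eventuallyEq {f g : EE → ℂ} {x : EE} (h : f =ᶠ[nhds x] g) :
    (fun s => f (s, x.2)) =ᶠ[nhds x.1] fun s => g (s, x.2) :=
  h.comp_tendsto ((continuous_id.prodMk continuous_const).tendsto' x.1 x rfl)

end Helpers

/-- For a C² diffeomorphism `Φ = (Φ₁,Φ₂) : I × Λ → Ω ⊆ ℍ` with legendrian curves
`Φ(·,p)`, the `s`-derivative of `A` is
`∂_s A = −∂_{s,p₁}Φ₁ (∂_{p₂}Φ₂ + 2Im(Φ̄₁∂_{p₂}Φ₁)) + ∂_{s,p₂}Φ₁ (∂_{p₁}Φ₂ + 2Im(Φ̄₁∂_{p₁}Φ₁))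
 + 4∂_sΦ₁ Im(∂_{p₁}Φ₁ conj(∂_{p₂}Φ₁))`, and consequently
`Im(conj(∂_sΦ₁)∂_s A)` has the stated expression. -/
theorem stmt18 (a b : ℝ) (Λ : Set (ℝ × ℝ)) (hΛ : IsOpen Λ) (Ω : Set (ℂ × ℝ))
    (Φ₁ : ℝ × (ℝ × ℝ) → ℂ) (Φ₂ : ℝ × (ℝ × ℝ) → ℝ)
    (hΦ : ContDiffOn ℝ 2 (fun x => (Φ₁ x, Φ₂ x)) (Set.Ioo a b ×ˢ Λ))
    (hbij : Set.BijOn (fun x => (Φ₁ x, Φ₂ x)) (Set.Ioo a b ×ˢ Λ) Ω)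
    (hleg : ∀ x ∈ Set.Ioo a b ×ˢ Λ,
      pdS (fun y => (Φ₂ y : ℂ)) x = -2 * (((starRingEnd ℂ) (Φ₁ x) * pdS Φ₁ x).im : ℝ)) :
    ∀ x ∈ Set.Ioo a b ×ˢ Λ,
      (pdS (funA Φ₁ Φ₂) x
        = -pdS (pd1 Φ₁) x * (pd2 (fun y => (Φ₂ y : ℂ)) x +
            2 * ((((starRingEnd ℂ) (Φ₁ x) * pd2 Φ₁ x).im : ℝ) : ℂ))
          + pdS (pd2 Φ₁) x * (pd1 (fun y => (Φ₂ y : ℂ)) x +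
            2 * ((((starRingEnd ℂ) (Φ₁ x) * pd1 Φ₁ x).im : ℝ) : ℂ))
          + 4 * pdS Φ₁ x * (((pd1 Φ₁ x * (starRingEnd ℂ) (pd2 Φ₁ x)).im : ℝ) : ℂ)) ∧
      ((starRingEnd ℂ) (pdS Φ₁ x) * pdS (funA Φ₁ Φ₂) x).im
        = -((pd2 (fun y => (Φ₂ y : ℂ)) x).re +
              2 * ((starRingEnd ℂ) (Φ₁ x) * pd2 Φ₁ x).im) *
            ((starRingEnd ℂ) (pdS Φ₁ x) * pdS (pd1 Φ₁) x).im
          + ((pd1 (fun y => (Φ₂ y : ℂ)) x).re +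
              2 * ((starRingEnd ℂ) (Φ₁ x) * pd1 Φ₁ x).im) *
            ((starRingEnd ℂ) (pdS Φ₁ x) * pdS (pd2 Φ₁) x).im := by
  intro x hx
  set U : Set (ℝ × (ℝ × ℝ)) := Set.Ioo a b ×ˢ Λ with hUdef
  have hU : IsOpen U := isOpen_Ioo.prod hΛ
  have hmem : U ∈ nhds x := hU.mem_nhds hx
  set Φ₂c : ℝ × (ℝ × ℝ) → ℂ := fun y => (Φ₂ y : ℂ) with hΦ₂cdef
  have hΦ₁ : ContDiffOn ℝ 2 Φ₁ U := (contDiff_fst.comp_contDiffOn hΦ : )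
  have hΦ₂ : ContDiffOn ℝ 2 Φ₂ U := (contDiff_snd.comp_contDiffOn hΦ : )
  have hΦ₂c : ContDiffOn ℝ 2 Φ₂c U :=
    Complex.ofRealCLM.contDiff.comp_contDiffOn hΦ₂
  -- differentiability at points of U
  have dΦ₁ : ∀ y ∈ U, DifferentiableAt ℝ Φ₁ y := fun y hy =>
    (hΦ₁.contDiffAt (hU.mem_nhds hy)).differentiableAt two_ne_zero
  have dΦ₂c : ∀ y ∈ U, DifferentiableAt ℝ Φ₂c y := fun y hy =>
    (hΦ₂c.contDiffAt (hU.mem_nhds hy)).differentiableAt two_ne_zero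
  set F : (ℝ × (ℝ × ℝ)) → (ℝ × (ℝ × ℝ)) →L[ℝ] ℂ := fderiv ℝ Φ₁ with hFdef
  set G : (ℝ × (ℝ × ℝ)) → (ℝ × (ℝ × ℝ)) →L[ℝ] ℂ := fderiv ℝ Φ₂c with hGdef
  have hFd : DifferentiableAt ℝ F x :=
    (((hΦ₁.contDiffAt hmem).fderiv_right (m := 1) (by norm_num)).differentiableAt one_ne_zero)
  have hGd : DifferentiableAt ℝ G x :=
    (((hΦ₂c.contDiffAt hmem).fderiv_right (m := 1) (by norm_num)).differentiableAt one_ne_zero)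
  set f'' := fderiv ℝ F x with hf''def
  set g'' := fderiv ℝ G x with hg''def
  have hfsym : ∀ v w, f'' v w = f'' w v := clairaut hU hx hΦ₁
  have hgsym : ∀ v w, g'' v w = g'' w v := clairaut hU hx hΦ₂c
  -- basic identifications at x
  have hxd1 : DifferentiableAt ℝ Φ₁ x := dΦ₁ x hx
  set Φ := Φ₁ x with hΦdef
  set D := F x eS with hDdef
  set C₁ := F x eP1 with hC₁def
  set C₂ := F x eP2 with hC₂def
  set E₁ := f'' eS eP1 with hE₁def
  set E₂ := f'' eS eP2 with hE₂def
  have hpdS₁ : pdS Φ₁ x = D := pdS_eq hxd1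
  have hpd1₁ : pd1 Φ₁ x = C₁ := pd1_eq hxd1
  have hpd2₁ : pd2 Φ₁ x = C₂ := pd2_eq hxd1
  have hpd1₂ : pd1 Φ₂c x = G x eP1 := pd1_eq (dΦ₂c x hx)
  have hpd2₂ : pd2 Φ₂c x = G x eP2 := pd2_eq (dΦ₂c x hx)
  -- G x v is real
  have hΦ₂d : DifferentiableAt ℝ Φ₂ x :=
    (hΦ₂.contDiffAt hmem).differentiableAt two_ne_zero
  have hGreal : ∀ v, G x v = ((fderiv ℝ Φ₂ x v : ℝ) : ℂ) := by
    intro v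
    have h := (Complex.ofRealCLM.hasFDerivAt.comp x hΦ₂d.hasFDerivAt).fderiv
    rw [hGdef, show Φ₂c = Complex.ofRealCLM ∘ Φ₂ from rfl, h]
    rfl
  obtain ⟨b₁, hb₁⟩ : ∃ r : ℝ, G x eP1 = (r : ℂ) := ⟨_, hGreal eP1⟩
  obtain ⟨b₂, hb₂⟩ : ∃ r : ℝ, G x eP2 = (r : ℂ) := ⟨_, hGreal eP2⟩
  -- second partials of Φ₁ in s
  have hevF1 : pd1 Φ₁ =ᶠ[nhds x] fun y => F y eP1 := by
    filter_upwards [hmem] with y hy; exact pd1_eq (dΦ₁ y hy)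
  have hevF2 : pd2 Φ₁ =ᶠ[nhds x] fun y => F y eP2 := by
    filter_upwards [hmem] with y hy; exact pd2_eq (dΦ₁ y hy)
  have hFS : HasDerivAt (fun s => F (s, x.2)) (f'' eS) x.1 := hasDerivAt_S hFd
  have hE₁' : pdS (pd1 Φ₁) x = E₁ := by
    have := (line_eventuallyEq hevF1).deriv_eq
    rw [pdS, this]
    exact (hasDerivAt_apply_const eP1 hFS).deriv
  have hE₂' : pdS (pd2 Φ₁) x = E₂ := by
    have := (line_eventuallyEq hevF2).deriv_eq
    rw [pdS, this]
    exact (hasDerivAt_apply_const eP2 hFS).deriv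
  -- imC apply
  have imC_apply : ∀ z : ℂ, imC z = ((z.im : ℝ) : ℂ) := fun _ => rfl
  set conjC : ℂ →L[ℝ] ℂ := (Complex.conjCLE : ℂ →L[ℝ] ℂ) with hconjCdef
  have conjC_apply : ∀ z : ℂ, conjC z = (starRingEnd ℂ) z := fun _ => rfl
  -- legendrian, rewritten with fderiv
  have hlegF : (fun y => G y eS) =ᶠ[nhds x]
      fun y => -2 * imC ((starRingEnd ℂ) (Φ₁ y) * F y eS) := by
    filter_upwards [hmem] with y hy
    rw [show G y eS = pdS Φ₂c y from (pdS_eq (dΦ₂c y hy)).symm, hleg y hy,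
      pdS_eq (dΦ₁ y hy), imC_apply]
  -- fderiv of the RHS of the legendrian relation
  have hconjΦ : HasFDerivAt (fun y => (starRingEnd ℂ) (Φ₁ y)) (conjC.comp (F x)) x :=
    conjC.hasFDerivAt.comp x hxd1.hasFDerivAt
  have hFeS : HasFDerivAt (fun y => F y eS) ((ContinuousLinearMap.apply ℝ ℂ eS).comp f'') x :=
    (ContinuousLinearMap.apply ℝ ℂ eS).hasFDerivAt.comp x hFd.hasFDerivAt
  have hmulL := hconjΦ.mul hFeS
  have hRHS := (imC.hasFDerivAt.comp x hmulL).const_mul (-2 : ℂ)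
  have hfeq : fderiv ℝ (fun y => G y eS) x
      = (-2 : ℂ) • (imC.comp ((starRingEnd ℂ) Φ • (ContinuousLinearMap.apply ℝ ℂ eS).comp f''
          + D • conjC.comp (F x))) := by
    rw [hlegF.fderiv_eq]
    exact hRHS.fderiv
  have hg : ∀ (v : ℝ × (ℝ × ℝ)),
      g'' eS v = -2 * imC ((starRingEnd ℂ) Φ * (f'' eS v) + D * (starRingEnd ℂ) (F x v)) := by
    intro v
    rw [hgsym eS v, ← fderiv_apply_const hGd eS v, hfeq, hfsym eS v]
    simp only [ContinuousLinearMap.smul_apply, ContinuousLinearMap.comp_apply,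
      ContinuousLinearMap.apply_apply, ContinuousLinearMap.add_apply, smul_eq_mul,
      conjC_apply]
  have hg1 := hg eP1
  have hg2 := hg eP2
  rw [← hC₁def] at hg1
  rw [← hC₂def] at hg2
  -- funA rewritten with fderiv near x
  have hevA : funA Φ₁ Φ₂ =ᶠ[nhds x]
      fun y => G y eP1 * F y eP2 - G y eP2 * F y eP1
        + 2 * Φ₁ y * imC (F y eP1 * (starRingEnd ℂ) (F y eP2)) := by
    filter_upwards [hmem] with y hy
    rw [funA, pd1_eq (dΦ₂c y hy), pd2_eq (dΦ₂c y hy), pd1_eq (dΦ₁ y hy),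
      pd2_eq (dΦ₁ y hy), imC_apply]
  -- product rule along the s-line
  have hGS : HasDerivAt (fun s => G (s, x.2)) (g'' eS) x.1 := hasDerivAt_S hGd
  have hb1S := hasDerivAt_apply_const eP1 hGS
  have hb2S := hasDerivAt_apply_const eP2 hGS
  have hc1S := hasDerivAt_apply_const eP1 hFS
  have hc2S := hasDerivAt_apply_const eP2 hFS
  have hφS : HasDerivAt (fun s => Φ₁ (s, x.2)) D x.1 := hasDerivAt_S hxd1
  have hconjc2 : HasDerivAt (fun s => (starRingEnd ℂ) (F (s, x.2) eP2))
      (conjC E₂) x.1 := conjC.hasFDerivAt.comp_hasDerivAt _ hc2S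
  have hprod := hc1S.mul hconjc2
  have hims := imC.hasFDerivAt.comp_hasDerivAt _ hprod
  have hA1 := ((hb1S.mul hc2S).sub (hb2S.mul hc1S)).add ((hφS.const_mul 2).mul hims)
  have hA : pdS (funA Φ₁ Φ₂) x
      = (g'' eS eP1 * C₂ + G x eP1 * E₂) - (g'' eS eP2 * C₁ + G x eP2 * E₁)
        + ((2 * D) * imC (C₁ * (starRingEnd ℂ) C₂)
          + 2 * Φ * (imC (E₁ * conjC C₂ + C₁ * conjC E₂))) := by
    rw [pdS, (line_eventuallyEq hevA).deriv_eq]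
    exact hA1.deriv
  -- the key formula
  have key : pdS (funA Φ₁ Φ₂) x
      = -E₁ * ((b₂ : ℂ) + 2 * ((((starRingEnd ℂ) Φ * C₂).im : ℝ) : ℂ))
        + E₂ * ((b₁ : ℂ) + 2 * ((((starRingEnd ℂ) Φ * C₁).im : ℝ) : ℂ))
        + 4 * D * (((C₁ * (starRingEnd ℂ) C₂).im : ℝ) : ℂ) := by
    rw [hA, hg1, hg2, hb₁, hb₂]
    simp only [imC_apply, conjC_apply]
    apply Complex.ext <;>
      simp [Complex.add_im, Complex.add_re, Complex.mul_im, Complex.mul_re] <;>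
      ring
  refine ⟨?_, ?_⟩
  · rw [key, hpdS₁, hpd1₁, hpd2₁, hpd1₂, hpd2₂, hE₁', hE₂', hb₁, hb₂]
  · rw [key, hpdS₁, hpd1₁, hpd2₁, hpd1₂, hpd2₂, hE₁', hE₂', hb₁, hb₂]
    simp only [Complex.ofReal_re]
    simp [Complex.add_im, Complex.add_re, Complex.mul_im, Complex.mul_re]
    ring
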